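/- arXiv:0811.2889 — 2 statements merged into one kernel-verified Lean document; each statement's English description precedes it below -/
import Mathlib

section
/- Let q : ℝ → ℍ be a differentiable curve of unit quaternions, x⃗′ ∈ ℝ³ a constant vector, and x(t) = q(t) ∘ (0, x⃗′) ∘ conj(q(t)). Writing 2 q̇ ∘ q̄ = (0, ω⃗), the time derivative of the imaginary part of x satisfies ẋ⃗ = ω⃗ × x⃗. -/
open Matrix

/-- The imaginary (vector) part of a quaternion as a vector in ℝ³. -/
def quatIm (q : Quaternion ℝ) : Fin 3 → ℝ := ![q.imI, q.imJ, q.imK]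

/-- Build a quaternion from a real scalar and a vector in ℝ³. -/
def quatMk (r : ℝ) (v : Fin 3 → ℝ) : Quaternion ℝ := ⟨r, v 0, v 1, v 2⟩

/-! Differentiating `q q̄ = 1` shows that `q q̇̄ = -q̇ q̄`, so for `x = q c q̄` and
`p = q̇ q̄` the product rule gives `ẋ = q̇ c q̄ + q c q̇̄ = p x - x p`; and the commutator of two
quaternions is the pure quaternion `2 p⃗ × x⃗`. -/

open Filter Topology Quaternion

instance Quaternion.instStarModule {R : Type*} [CommRing R] [StarRing R] [TrivialStar R] :
    StarModule R ℍ[R] :=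
  ⟨fun r a => by rw [Quaternion.star_smul, star_trivial r]⟩

theorem Quaternion.mem_unitary_of_norm_eq_one {q : ℍ[ℝ]} (hq : ‖q‖ = 1) : q ∈ unitary ℍ[ℝ] := by
  have hnormSq : normSq q = 1 := by rw [normSq_eq_norm_mul_self, hq, one_mul]
  exact Unitary.mem_iff.2
    ⟨by rw [star_mul_self, hnormSq, coe_one], by rw [self_mul_star, hnormSq, coe_one]⟩

section UnitaryCurve

variable {A : Type*} [NormedRing A] [NormedAlgebra ℝ A] [StarRing A] [StarModule ℝ A]
  [ContinuousStar A] {q : ℝ → A} {q' : A} {t : ℝ}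

theorem HasDerivAt.mul_star_deriv_eq_neg_of_mem_unitary (hq : HasDerivAt q q' t)
    (hU : ∀ᶠ s in 𝓝 t, q s ∈ unitary A) : q t * star q' = -(q' * star (q t)) := by
  have hprod : HasDerivAt (fun s => q s * star (q s)) (q' * star (q t) + q t * star q') t :=
    hq.fun_mul hq.star
  have hconst : HasDerivAt (fun s => q s * star (q s)) 0 t :=
    (hasDerivAt_const t 1).congr_of_eventuallyEq
      (hU.mono fun s hs => Unitary.mul_star_self_of_mem hs)
  exact eq_neg_of_add_eq_zero_right (hprod.unique hconst)

theorem HasDerivAt.conj_of_mem_unitary (hq : HasDerivAt q q' t)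
    (hU : ∀ᶠ s in 𝓝 t, q s ∈ unitary A) (c : A) :
    HasDerivAt (fun s => q s * c * star (q s))
      (q' * star (q t) * (q t * c * star (q t)) - q t * c * star (q t) * (q' * star (q t))) t := by
  have hqt : star (q t) * q t = 1 := Unitary.star_mul_self_of_mem hU.self_of_nhds
  convert (hq.mul_const c).fun_mul hq.star using 1
  calc q' * star (q t) * (q t * c * star (q t)) - q t * c * star (q t) * (q' * star (q t))
      = q' * (star (q t) * q t) * c * star (q t) + q t * c * star (q t) * (q t * star q') := by
        rw [hq.mul_star_deriv_eq_neg_of_mem_unitary hU]; noncomm_ring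
    _ = q' * (star (q t) * q t) * c * star (q t) + q t * c * (star (q t) * q t) * star q' := by
        noncomm_ring
    _ = q' * c * star (q t) + q t * c * star q' := by rw [hqt]; noncomm_ring

end UnitaryCurve

theorem HasDerivAt.quatIm {f : ℝ → ℍ[ℝ]} {f' : ℍ[ℝ]} {t : ℝ} (hf : HasDerivAt f f' t) :
    HasDerivAt (fun s => quatIm (f s)) (quatIm f') t := by
  refine hasDerivAt_pi.2 fun i => ?_
  fin_cases i
  exacts [(QuaternionAlgebra.imIₗ _ _ _).toContinuousLinearMap.hasFDerivAt.comp_hasDerivAt t hf,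
    (QuaternionAlgebra.imJₗ _ _ _).toContinuousLinearMap.hasFDerivAt.comp_hasDerivAt t hf,
    (QuaternionAlgebra.imKₗ _ _ _).toContinuousLinearMap.hasFDerivAt.comp_hasDerivAt t hf]

theorem quatIm_mul_sub_mul (p x : ℍ[ℝ]) :
    quatIm (p * x - x * p) = crossProduct (quatIm (2 * p)) (quatIm x) := by
  ext i
  fin_cases i <;> simp [quatIm, cross_apply, two_mul] <;> ring

theorem fixed_frame_angular_velocity (q : ℝ → Quaternion ℝ)
    (hdiff : Differentiable ℝ q) (hunit : ∀ t, ‖q t‖ = 1)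
    (x' : Fin 3 → ℝ) (x : ℝ → Quaternion ℝ)
    (hx : ∀ t, x t = q t * quatMk 0 x' * star (q t))
    (ω : ℝ → Fin 3 → ℝ)
    (hω : ∀ t, ω t = quatIm (2 * (deriv q t * star (q t)))) (t : ℝ) :
    deriv (fun s => quatIm (x s)) t = crossProduct (ω t) (quatIm (x t)) := by
  have hU : ∀ᶠ s in 𝓝 t, q s ∈ unitary ℍ[ℝ] :=
    Eventually.of_forall fun s => mem_unitary_of_norm_eq_one (hunit s)
  obtain rfl : x = fun s => q s * quatMk 0 x' * star (q s) := funext hx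
  rw [((hdiff t).hasDerivAt.conj_of_mem_unitary hU (quatMk 0 x')).quatIm.deriv, hω,
    quatIm_mul_sub_mul]
end

section
/- Let q : ℝ → ℍ be a differentiable curve of unit quaternions with matrices G(t) built from q(t) and body angular velocity ω⃗′ = 2G𝐪̇. Then the matrix Ω′ = 2GĠᵀ satisfies Ω′ = −2ĠGᵀ and Ω′ v⃗ = ω⃗′ × v⃗ for all v⃗ ∈ ℝ³, i.e. Ω′ is the skew-symmetric cross-product matrix of ω⃗′. -/
open Matrix

/-- The 3×4 matrix E built from the components of a quaternion. -/
def Emat (q : Quaternion ℝ) : Matrix (Fin 3) (Fin 4) ℝ :=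
  !![-q.imI, q.re, -q.imK, q.imJ;
     -q.imJ, q.imK, q.re, -q.imI;
     -q.imK, -q.imJ, q.imI, q.re]

/-- The 3×4 matrix G built from the components of a quaternion. -/
def Gmat (q : Quaternion ℝ) : Matrix (Fin 3) (Fin 4) ℝ :=
  !![-q.imI, q.re, q.imK, -q.imJ;
     -q.imJ, -q.imK, q.re, q.imI;
     -q.imK, q.imJ, -q.imI, q.re]

/-- The quaternion as a coordinate 4-vector. -/
def quatVec (q : Quaternion ℝ) : Fin 4 → ℝ := ![q.re, q.imI, q.imJ, q.imK]

/-!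
`G` is linear in `q`, so `Ġ = G(q̇)`. The 3×3 matrix `G(p) G(q)ᵀ` is `⟨p, q⟩ I` plus the
cross-product matrix of `G(p) q`, and its symmetrization is `2 ⟨p, q⟩ I`. A curve on the unit sphere
has `⟨q, q̇⟩ = 0`, so for the pair `q, q̇` only the cross-product part survives.
-/

theorem deriv_linearMap_comp {E F : Type*} [NormedAddCommGroup E] [NormedSpace ℝ E]
    [FiniteDimensional ℝ E] [NormedAddCommGroup F] [NormedSpace ℝ F]
    (L : E →ₗ[ℝ] F) {f : ℝ → E} {t : ℝ} (hf : DifferentiableAt ℝ f t) :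
    deriv (fun s => L (f s)) t = L (deriv f t) :=
  (L.toContinuousLinearMap.hasFDerivAt.comp_hasDerivAt t hf.hasDerivAt).deriv

theorem inner_deriv_eq_zero_of_norm_const {F : Type*} [NormedAddCommGroup F]
    [InnerProductSpace ℝ F] {f : ℝ → F} {c t : ℝ} (hf : DifferentiableAt ℝ f t)
    (hc : ∀ s, ‖f s‖ = c) : inner ℝ (f t) (deriv f t) = 0 := by
  have hconst : HasDerivAt (‖f ·‖ ^ 2) 0 t := by
    simpa only [hc] using hasDerivAt_const t (c ^ 2)
  simpa using hf.hasDerivAt.norm_sq.unique hconst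

def GmatLinearMap : Quaternion ℝ →ₗ[ℝ] Matrix (Fin 3) (Fin 4) ℝ where
  toFun := Gmat
  map_add' p q := by ext i j; fin_cases i <;> fin_cases j <;> simp [Gmat] <;> ring
  map_smul' c q := by ext i j; fin_cases i <;> fin_cases j <;> simp [Gmat]

theorem deriv_Gmat_apply {q : ℝ → Quaternion ℝ} {t : ℝ} (hq : DifferentiableAt ℝ q t)
    (i : Fin 3) (j : Fin 4) :
    deriv (fun s => Gmat (q s) i j) t = Gmat (deriv q t) i j :=
  deriv_linearMap_comp (entryLinearMap ℝ ℝ i j ∘ₗ GmatLinearMap) hq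

theorem deriv_quatVec_apply {q : ℝ → Quaternion ℝ} {t : ℝ} (hq : DifferentiableAt ℝ q t)
    (i : Fin 4) :
    deriv (fun s => quatVec (q s) i) t = quatVec (deriv q t) i :=
  deriv_linearMap_comp
    (LinearMap.proj i ∘ₗ (QuaternionAlgebra.linearEquivTuple (-1 : ℝ) 0 (-1)).toLinearMap) hq

theorem Gmat_mul_transpose_add_swap (p q : Quaternion ℝ) :
    Gmat p * (Gmat q)ᵀ + Gmat q * (Gmat p)ᵀ =
      (2 * inner ℝ p q) • (1 : Matrix (Fin 3) (Fin 3) ℝ) := by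
  ext i j
  simp only [Matrix.add_apply, Matrix.smul_apply, mul_apply, transpose_apply, Fin.sum_univ_four]
  fin_cases i <;> fin_cases j <;> simp [Gmat, Quaternion.inner_def] <;> ring

theorem Gmat_mul_transpose_mulVec (p q : Quaternion ℝ) (v : Fin 3 → ℝ) :
    (Gmat p * (Gmat q)ᵀ) *ᵥ v = inner ℝ p q • v + (Gmat p *ᵥ quatVec q) ⨯₃ v := by
  ext i
  fin_cases i <;>
    simp [Gmat, quatVec, Quaternion.inner_def, mulVec, dotProduct, mul_apply, Fin.sum_univ_four,
      Fin.sum_univ_three, cross_apply] <;> ring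

theorem Omega_body_is_cross_product_matrix (q : ℝ → Quaternion ℝ)
    (hdiff : Differentiable ℝ q) (hunit : ∀ t, ‖q t‖ = 1)
    (Gdot : ℝ → Matrix (Fin 3) (Fin 4) ℝ)
    (hGdot : ∀ t i j, Gdot t i j = deriv (fun s => Gmat (q s) i j) t)
    (qvecdot : ℝ → Fin 4 → ℝ)
    (hqvecdot : ∀ t i, qvecdot t i = deriv (fun s => quatVec (q s) i) t)
    (ω' : ℝ → Fin 3 → ℝ) (hω : ∀ t, ω' t = (2 : ℝ) • (Gmat (q t) *ᵥ qvecdot t))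
    (t : ℝ) :
    (2 : ℝ) • (Gmat (q t) * (Gdot t)ᵀ) = -((2 : ℝ) • (Gdot t * (Gmat (q t))ᵀ)) ∧
    ∀ v : Fin 3 → ℝ,
      ((2 : ℝ) • (Gmat (q t) * (Gdot t)ᵀ)) *ᵥ v = crossProduct (ω' t) v := by
  have hGdot_eq : Gdot t = Gmat (deriv q t) := by
    ext i j
    rw [hGdot, deriv_Gmat_apply (hdiff t)]
  have hqvecdot_eq : qvecdot t = quatVec (deriv q t) := by
    ext i
    rw [hqvecdot, deriv_quatVec_apply (hdiff t)]
  have horth : inner ℝ (q t) (deriv q t) = 0 := inner_deriv_eq_zero_of_norm_const (hdiff t) hunit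
  rw [hGdot_eq]
  constructor
  · have hskew := Gmat_mul_transpose_add_swap (q t) (deriv q t)
    rw [horth, mul_zero, zero_smul] at hskew
    rw [eq_neg_iff_add_eq_zero, ← smul_add, hskew, smul_zero]
  · intro v
    rw [hω, hqvecdot_eq, smul_mulVec, Gmat_mul_transpose_mulVec, horth, zero_smul, zero_add,
      LinearMap.map_smul₂]
end
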